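/- arXiv:2303.16086 — 3 statements merged into one kernel-verified Lean document; each statement's English description precedes it below -/
import Mathlib

section
/- For every n ≥ 0, the assignment sending f ∈ D^(n) to the map (R ⊗_k R)/I^(n+1) → R induced by a ⊗ b ↦ a·f(b) is well defined (the induced map kills I^(n+1) and is R-linear for the first-factor R-module structure on (R ⊗_k R)/I^(n+1)), and it is a bijection from D^(n) onto Hom_R((R ⊗_k R)/I^(n+1), R). -/
open TensorProduct

noncomputable section

namespace GrothDiff

variable (k R : Type*) [CommRing k] [CommRing R] [Algebra k R]

/-- The action of `R ⊗[k] R` on `Hom_k(R,R)` given by `((a₁ ⊗ a₂) • f) x = a₁ * f (a₂ * x)`. -/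
def act : (R ⊗[k] R) →ₗ[k] (R →ₗ[k] R) →ₗ[k] (R →ₗ[k] R) :=
  TensorProduct.lift <| LinearMap.mk₂ k
    (fun a₁ a₂ =>
      { toFun := fun f => LinearMap.mulLeft k a₁ ∘ₗ f ∘ₗ LinearMap.mulLeft k a₂
        map_add' := fun f g => by ext x; simp [mul_add]
        map_smul' := fun c f => by ext x; simp [mul_smul_comm] })
    (fun a b c => by ext f x; simp [add_mul])
    (fun c a b => by ext f x; simp [smul_mul_assoc])
    (fun a b c => by ext f x; simp [add_mul, mul_add])
    (fun a b c => by ext f x; simp [smul_mul_assoc, mul_smul_comm])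

/-- `Dm k R n` is the Grothendieck order filtration `D^(n-1)`; in particular
`Dm k R 0 = D^(-1) = {0}` and `Dm k R (n+1) = D^(n)`. -/
def Dm : ℕ → Set (R →ₗ[k] R)
  | 0 => {0}
  | n + 1 =>
      {f | ∀ r : R,
        f ∘ₗ LinearMap.mulLeft k r - LinearMap.mulLeft k r ∘ₗ f ∈ Dm n}

/-- `D k R n` is the Grothendieck order filtration `D^(n)` for `n ≥ 0`. -/
def D (n : ℕ) : Set (R →ₗ[k] R) := Dm k R (n + 1)

/-- The module of Grothendieck differential operators `𝒟_{R/k} = ⋃_{n ≥ 0} D^(n)`. -/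
def GD : Set (R →ₗ[k] R) := ⋃ n : ℕ, D k R n

/-- The kernel `I` of the multiplication map `μ : R ⊗[k] R → R`. -/
def Ik : Ideal (R ⊗[k] R) := RingHom.ker (Algebra.TensorProduct.lmul' k (S := R))

/-- The `R`-linear map `R ⊗[k] R → R` (for the first-factor `R`-module structure) attached to
`f ∈ Hom_k(R,R)`, determined by `a ⊗ b ↦ a * f b`. -/
def Phi (f : R →ₗ[k] R) : (R ⊗[k] R) →ₗ[R] R :=
  TensorProduct.AlgebraTensorModule.lift (LinearMap.toSpanSingleton R (R →ₗ[k] R) f)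

lemma Phi_tmul (f : R →ₗ[k] R) (a b : R) : Phi k R f (a ⊗ₜ[k] b) = a * f b := by
  simp [Phi]

lemma delta_mem_Ik (r : R) : (1 : R) ⊗ₜ[k] r - r ⊗ₜ[k] 1 ∈ Ik k R := by
  simp [Ik, RingHom.mem_ker, mul_comm]

lemma Ik_le_span : ∀ x ∈ Ik k R, x ∈ Submodule.span R
    {x : R ⊗[k] R | ∃ r : R, x = (1 : R) ⊗ₜ[k] r - r ⊗ₜ[k] 1} := by
  intro x hx
  have key : ∀ y : R ⊗[k] R,
      y - (Algebra.TensorProduct.lmul' k (S := R) y) ⊗ₜ[k] (1:R) ∈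
        Submodule.span R {x : R ⊗[k] R | ∃ r : R, x = (1 : R) ⊗ₜ[k] r - r ⊗ₜ[k] 1} := by
    intro y
    induction y using TensorProduct.induction_on with
    | zero => simp
    | tmul a b =>
        have : a ⊗ₜ[k] b - (a * b) ⊗ₜ[k] (1:R)
            = a • ((1 : R) ⊗ₜ[k] b - b ⊗ₜ[k] 1) := by
          simp [smul_sub, smul_tmul', smul_eq_mul]
        rw [Algebra.TensorProduct.lmul'_apply_tmul, this]
        exact Submodule.smul_mem _ _ (Submodule.subset_span ⟨b, rfl⟩)
    | add y z hy hz =>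
        have : (y + z) - (Algebra.TensorProduct.lmul' k (S := R) (y + z)) ⊗ₜ[k] (1:R)
            = (y - (Algebra.TensorProduct.lmul' k (S := R) y) ⊗ₜ[k] (1:R))
              + (z - (Algebra.TensorProduct.lmul' k (S := R) z) ⊗ₜ[k] (1:R)) := by
          rw [map_add, add_tmul]; ring
        rw [this]; exact Submodule.add_mem _ hy hz
  have hx0 : Algebra.TensorProduct.lmul' k (S := R) x = 0 := hx
  have := key x
  rwa [hx0, zero_tmul, sub_zero] at this

lemma Phi_comm (f : R →ₗ[k] R) (r : R) (ξ : R ⊗[k] R) :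
    Phi k R (f ∘ₗ LinearMap.mulLeft k r - LinearMap.mulLeft k r ∘ₗ f) ξ
      = Phi k R f (((1 : R) ⊗ₜ[k] r - r ⊗ₜ[k] 1) * ξ) := by
  induction ξ using TensorProduct.induction_on with
  | zero => simp
  | tmul a b =>
      simp only [sub_mul, Algebra.TensorProduct.tmul_mul_tmul, one_mul, map_sub,
        Phi_tmul, LinearMap.sub_apply, LinearMap.comp_apply, LinearMap.mulLeft_apply]
      ring
  | add y z hy hz => simp only [map_add, mul_add, hy, hz]

lemma mem_Dm_iff (n : ℕ) (f : R →ₗ[k] R) :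
    f ∈ Dm k R n ↔ ∀ ξ ∈ (Ik k R) ^ n, Phi k R f ξ = 0 := by
  induction n generalizing f with
  | zero =>
      constructor
      · rintro rfl ξ _
        induction ξ using TensorProduct.induction_on with
        | zero => simp
        | tmul a b => simp [Phi_tmul]
        | add y z hy hz => simp [map_add, hy, hz]
      · intro h
        have : f = 0 := by
          ext b
          have := h ((1:R) ⊗ₜ[k] b) (by simp [pow_zero, Ideal.one_eq_top])
          simpa [Phi_tmul] using this
        simpa [Dm] using this
  | succ n ih =>
      constructor
      · intro hf ξ hξ
        rw [pow_succ] at hξ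
        refine Submodule.mul_induction_on hξ ?_ ?_
        · intro x hx y hy
          -- x ∈ Ik^n, y ∈ Ik
          have hy' := Ik_le_span k R y hy
          rw [mul_comm]
          refine Submodule.span_induction (p := fun y _ => Phi k R f (y * x) = 0)
            ?_ ?_ ?_ ?_ hy'
          · rintro _ ⟨r, rfl⟩
            rw [← Phi_comm]
            exact (ih _).1 (hf r) x hx
          · simp
          · intro a b _ _ ha hb
            rw [add_mul, map_add, ha, hb, add_zero]
          · intro a y _ hy
            rw [smul_mul_assoc, map_smul, hy, smul_zero]
        · intro a b ha hb
          rw [map_add, ha, hb, add_zero]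
      · intro h r
        rw [ih]
        intro ξ hξ
        rw [Phi_comm]
        exact h _ (by
          rw [pow_succ, mul_comm]
          exact Ideal.mul_mem_mul (delta_mem_Ik k R r) hξ)

/-- For every `n ≥ 0`, sending `f ∈ D^(n)` to the map
`(R ⊗_k R)/I^(n+1) → R` induced by `a ⊗ b ↦ a·f(b)` is well defined (the `R`-linear map `Phi f`
kills `I^(n+1)`, hence descends to the quotient), and it is a bijection from `D^(n)` onto
`Hom_R((R ⊗_k R)/I^(n+1), R)`: it is injective on `D^(n)`, and every `R`-linear map
`ψ : (R ⊗_k R)/I^(n+1) → R` is induced by a unique such `f ∈ D^(n)`. -/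
theorem D_bijective_to_hom_quotient (n : ℕ) :
    (∀ f ∈ D k R n, ∀ ξ ∈ (Ik k R) ^ (n + 1), Phi k R f ξ = 0) ∧
    (∀ f ∈ D k R n, ∀ g ∈ D k R n, Phi k R f = Phi k R g → f = g) ∧
    (∀ ψ : ((R ⊗[k] R) ⧸ (Submodule.restrictScalars R ((Ik k R) ^ (n + 1)))) →ₗ[R] R,
      ∃ f ∈ D k R n, ∀ ξ : R ⊗[k] R, Phi k R f ξ = ψ (Submodule.Quotient.mk ξ)) := by
  refine ⟨fun f hf => (mem_Dm_iff k R (n+1) f).1 hf, ?_, ?_⟩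
  · intro f _ g _ h
    ext b
    have := congrArg (fun φ => φ ((1:R) ⊗ₜ[k] b)) h
    simpa [Phi_tmul] using this
  · intro ψ
    set Q := (R ⊗[k] R) ⧸ (Submodule.restrictScalars R ((Ik k R) ^ (n + 1)))
    set f : R →ₗ[k] R :=
      (ψ.restrictScalars k) ∘ₗ
        ((Submodule.restrictScalars R ((Ik k R) ^ (n + 1))).mkQ.restrictScalars k) ∘ₗ
        (TensorProduct.mk k R R 1) with hf
    have hPhi : ∀ ξ : R ⊗[k] R, Phi k R f ξ = ψ (Submodule.Quotient.mk ξ) := by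
      intro ξ
      induction ξ using TensorProduct.induction_on with
      | zero => simp
      | tmul a b =>
          have h1 : (Submodule.Quotient.mk (a ⊗ₜ[k] b) : Q)
              = a • (Submodule.Quotient.mk ((1:R) ⊗ₜ[k] b) : Q) := by
            rw [← Submodule.Quotient.mk_smul]
            congr 1
            rw [smul_tmul', smul_eq_mul, mul_one]
          rw [Phi_tmul, h1, map_smul, smul_eq_mul]
          simp [hf, Submodule.mkQ_apply]
      | add y z hy hz => simp [map_add, hy, hz, Submodule.Quotient.mk_add]
    refine ⟨f, ?_, hPhi⟩
    rw [D, mem_Dm_iff]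
    intro ξ hξ
    rw [hPhi ξ, (Submodule.Quotient.mk_eq_zero _).2 (by exact hξ), map_zero]

end GrothDiff
end
end

section
/- For k = ℤ and R = ℤ[X], the n-th Hasse derivative h_n belongs to D^(n) for every n ≥ 0 (and for n ≥ 1 it does not belong to D^(n−1)). -/
/-!
By the Leibniz rule for Hasse derivatives, the commutator of `h_(n+1)` with multiplication by `r`
is `∑_{i+j=n} h_(i+1)(r) · h_j`, an `R`-linear combination of `h_0, …, h_n`. Each `D^(m)` is an
`R`-submodule of `Hom_k(R, R)` (with `R` acting on values) and the filtration is increasing, so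
strong induction gives `h_n ∈ D^(n)`. For `r = X` only the term `h_1(X) · h_n` survives, so
`[h_(n+1), X] = h_n`; since `h_0 = id ≠ 0`, induction gives `h_n ∉ D^(n-1)`.
-/

open TensorProduct

noncomputable section

namespace GrothDiff

variable (k R : Type*) [CommRing k] [CommRing R] [Algebra k R]

variable {k R}

@[simps]
def commutatorMulLeft (r : R) : (R →ₗ[k] R) →ₗ[R] (R →ₗ[k] R) where
  toFun f := f ∘ₗ LinearMap.mulLeft k r - LinearMap.mulLeft k r ∘ₗ f
  map_add' f g := by ext; simp [mul_add]; abel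
  map_smul' s f := by ext; simp [mul_sub, mul_left_comm]

variable (k R) in
def orderFiltration : ℕ → Submodule R (R →ₗ[k] R)
  | 0 => ⊥
  | n + 1 => ⨅ r : R, (orderFiltration n).comap (commutatorMulLeft r)

theorem mem_orderFiltration_succ {n : ℕ} {f : R →ₗ[k] R} :
    f ∈ orderFiltration k R (n + 1) ↔ ∀ r : R, commutatorMulLeft r f ∈ orderFiltration k R n :=
  Submodule.mem_iInf _

theorem coe_orderFiltration (n : ℕ) : (orderFiltration k R n : Set (R →ₗ[k] R)) = Dm k R n := by
  induction n with
  | zero => exact Submodule.bot_coe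
  | succ n ih =>
    ext f
    exact mem_orderFiltration_succ.trans (forall_congr' fun r => Set.ext_iff.1 ih _)

theorem orderFiltration_le_succ (n : ℕ) : orderFiltration k R n ≤ orderFiltration k R (n + 1) := by
  induction n with
  | zero => exact bot_le
  | succ n ih => exact iInf_mono fun r => Submodule.comap_mono ih

theorem orderFiltration_mono : Monotone (orderFiltration k R) :=
  monotone_nat_of_le_succ orderFiltration_le_succ

section Polynomial

open Polynomial Finset

variable {A : Type*} [CommRing A]

theorem commutatorMulLeft_hasseDeriv_succ (n : ℕ) (r : A[X]) :
    commutatorMulLeft r (hasseDeriv (n + 1) : A[X] →ₗ[A] A[X])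
      = ∑ ij ∈ antidiagonal n, hasseDeriv (ij.1 + 1) r • (hasseDeriv ij.2 : A[X] →ₗ[A] A[X]) := by
  refine LinearMap.ext fun p => ?_
  simp only [commutatorMulLeft_apply, LinearMap.sub_apply, LinearMap.comp_apply,
    LinearMap.mulLeft_apply, hasseDeriv_mul, Nat.sum_antidiagonal_succ, hasseDeriv_zero',
    add_sub_cancel_left, LinearMap.sum_apply, LinearMap.smul_apply, smul_eq_mul]

theorem commutatorMulLeft_X_hasseDeriv_succ (n : ℕ) :
    commutatorMulLeft X (hasseDeriv (n + 1) : A[X] →ₗ[A] A[X]) = hasseDeriv n := by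
  rw [commutatorMulLeft_hasseDeriv_succ, sum_eq_single (0, n)]
  · simp
  · rintro ⟨_ | i, j⟩ hij hne
    · simp_all [Finset.HasAntidiagonal.mem_antidiagonal]
    · rw [hasseDeriv_X _ (by omega : 1 < i + 2), zero_smul]
  · simp

theorem hasseDeriv_mem_orderFiltration (n : ℕ) :
    (hasseDeriv n : A[X] →ₗ[A] A[X]) ∈ orderFiltration A A[X] (n + 1) := by
  induction n using Nat.strong_induction_on with
  | _ n ih =>
    refine mem_orderFiltration_succ.2 fun r => ?_
    rcases n with _ | n
    · simp
    rw [commutatorMulLeft_hasseDeriv_succ]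
    refine Submodule.sum_mem _ fun ij hij => Submodule.smul_mem _ _ ?_
    have hj : ij.2 ≤ n := by grind [Finset.HasAntidiagonal.mem_antidiagonal]
    exact orderFiltration_mono (by omega) (ih ij.2 (by omega))

theorem hasseDeriv_notMem_orderFiltration [Nontrivial A] (n : ℕ) :
    (hasseDeriv n : A[X] →ₗ[A] A[X]) ∉ orderFiltration A A[X] n := by
  induction n with
  | zero =>
    intro h
    simpa using LinearMap.congr_fun ((Submodule.mem_bot A).1 h) 1
  | succ n ih =>
    intro h
    have := mem_orderFiltration_succ.1 h X
    rw [commutatorMulLeft_X_hasseDeriv_succ] at this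
    exact ih this

end Polynomial

/-- For `k = ℤ` and `R = ℤ[X]`, the `n`-th Hasse derivative `h_n` belongs to
`D^(n)` for every `n ≥ 0`, and for `n ≥ 1` it does not belong to `D^(n−1)`. -/
theorem hasseDeriv_mem_D :
    (∀ n : ℕ,
      (Polynomial.hasseDeriv n : Polynomial ℤ →ₗ[ℤ] Polynomial ℤ) ∈ D ℤ (Polynomial ℤ) n) ∧
    (∀ n : ℕ, 1 ≤ n →
      (Polynomial.hasseDeriv n : Polynomial ℤ →ₗ[ℤ] Polynomial ℤ) ∉ D ℤ (Polynomial ℤ) (n - 1)) := by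
  simp only [D, ← coe_orderFiltration, SetLike.mem_coe]
  refine ⟨hasseDeriv_mem_orderFiltration, fun n hn => ?_⟩
  rw [Nat.sub_add_cancel hn]
  exact hasseDeriv_notMem_orderFiltration n

end GrothDiff
end
end

section
/- For k = ℤ and R = ℤ[X] and every n ≥ 0, D^(n) is a free ℤ[X]-module with basis h_0, h_1, …, h_n: every f ∈ D^(n) can be written uniquely as f = Σ_{j=0}^{n} m_{p_j} ∘ h_j with p_0, …, p_n ∈ ℤ[X], where ℤ[X] acts on Hom_ℤ(ℤ[X],ℤ[X]) by postcomposition with multiplication operators. -/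
open TensorProduct

noncomputable section

namespace GrothDiff

variable (k R : Type*) [CommRing k] [CommRing R] [Algebra k R]

section Aux
open Polynomial
variable {k R}

lemma mem_Dm_succ {n : ℕ} {f : R →ₗ[k] R} :
    f ∈ Dm k R (n+1) ↔ ∀ r : R,
      f ∘ₗ LinearMap.mulLeft k r - LinearMap.mulLeft k r ∘ₗ f ∈ Dm k R n := Iff.rfl

lemma zero_mem_Dm (n : ℕ) : (0 : R →ₗ[k] R) ∈ Dm k R n := by
  induction n with
  | zero => rfl
  | succ n ih => rw [mem_Dm_succ]; intro r; simpa using ih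

lemma add_mem_Dm {n : ℕ} {f g : R →ₗ[k] R} (hf : f ∈ Dm k R n) (hg : g ∈ Dm k R n) :
    f + g ∈ Dm k R n := by
  induction n generalizing f g with
  | zero =>
    rw [Set.mem_singleton_iff.mp hf, Set.mem_singleton_iff.mp hg]; simp [Dm]
  | succ n ih =>
    rw [mem_Dm_succ] at hf hg ⊢
    intro r
    simpa [LinearMap.add_comp, LinearMap.comp_add, add_sub_add_comm] using ih (hf r) (hg r)

lemma sum_mem_Dm {ι : Type*} (s : Finset ι) (F : ι → (R →ₗ[k] R)) {n : ℕ}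
    (h : ∀ i ∈ s, F i ∈ Dm k R n) : (∑ i ∈ s, F i) ∈ Dm k R n :=
  Finset.sum_induction F (· ∈ Dm k R n) (fun _ _ ha hb => add_mem_Dm ha hb) (zero_mem_Dm n) h

lemma mulLeft_comp_mem_Dm (p : R) {n : ℕ} {f : R →ₗ[k] R} (hf : f ∈ Dm k R n) :
    LinearMap.mulLeft k p ∘ₗ f ∈ Dm k R n := by
  induction n generalizing f with
  | zero => rw [Set.mem_singleton_iff.mp hf]; simp [Dm]
  | succ n ih =>
    rw [mem_Dm_succ] at hf ⊢
    intro r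
    have key : (LinearMap.mulLeft k p ∘ₗ f) ∘ₗ LinearMap.mulLeft k r -
        LinearMap.mulLeft k r ∘ₗ (LinearMap.mulLeft k p ∘ₗ f)
        = LinearMap.mulLeft k p ∘ₗ (f ∘ₗ LinearMap.mulLeft k r - LinearMap.mulLeft k r ∘ₗ f) := by
      refine LinearMap.ext fun x => ?_
      simp [mul_sub, mul_left_comm]
    rw [key]
    exact ih (hf r)

lemma Dm_mono {n : ℕ} : Dm k R n ⊆ Dm k R (n + 1) := by
  induction n with
  | zero => intro f hf; rw [Set.mem_singleton_iff.mp hf]; exact zero_mem_Dm 1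
  | succ n ih =>
    intro f hf
    rw [mem_Dm_succ] at hf ⊢
    exact fun r => ih (hf r)

lemma Dm_le {m n : ℕ} (h : m ≤ n) : Dm k R m ⊆ Dm k R n := by
  induction h with
  | refl => exact subset_rfl
  | step _ ih => exact ih.trans Dm_mono

-- polynomial specific parts

lemma hasse_mem_Dm (j : ℕ) :
    (hasseDeriv j : Polynomial ℤ →ₗ[ℤ] Polynomial ℤ) ∈ Dm ℤ (Polynomial ℤ) (j + 1) := by
  induction j using Nat.strong_induction_on with
  | _ j ih =>
  match j with
  | 0 =>
    rw [mem_Dm_succ]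
    intro r
    have key : (hasseDeriv 0 : Polynomial ℤ →ₗ[ℤ] Polynomial ℤ) ∘ₗ LinearMap.mulLeft ℤ r -
        LinearMap.mulLeft ℤ r ∘ₗ hasseDeriv 0 = 0 := by
      refine LinearMap.ext fun x => ?_
      simp [hasseDeriv_zero']
    rw [key]
    exact zero_mem_Dm 0
  | m + 1 =>
    rw [mem_Dm_succ]
    intro r
    have key : (hasseDeriv (m+1) : Polynomial ℤ →ₗ[ℤ] Polynomial ℤ) ∘ₗ LinearMap.mulLeft ℤ r -
        LinearMap.mulLeft ℤ r ∘ₗ hasseDeriv (m+1)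
        = ∑ i ∈ Finset.range (m+1),
            LinearMap.mulLeft ℤ (hasseDeriv (i+1) r) ∘ₗ (hasseDeriv (m - i)) := by
      refine LinearMap.ext fun x => ?_
      simp only [LinearMap.sub_apply, LinearMap.comp_apply, LinearMap.mulLeft_apply,
        LinearMap.sum_apply]
      rw [hasseDeriv_mul, Finset.Nat.sum_antidiagonal_eq_sum_range_succ_mk,
        Finset.sum_range_succ']
      simp [hasseDeriv_zero', Nat.succ_sub_succ]
    rw [key]
    refine sum_mem_Dm _ _ fun i hi => ?_
    have hi' : i < m + 1 := Finset.mem_range.mp hi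
    have h1 := mulLeft_comp_mem_Dm (k := ℤ) (hasseDeriv (i+1) r) (ih (m - i) (by omega))
    exact Dm_le (by omega) h1

lemma commX_all {f : Polynomial ℤ →ₗ[ℤ] Polynomial ℤ}
    (h : ∀ x, f (Polynomial.X * x) = Polynomial.X * f x) (r x : Polynomial ℤ) :
    f (r * x) = r * f x := by
  have hXn : ∀ n : ℕ, ∀ x, f (Polynomial.X ^ n * x) = Polynomial.X ^ n * f x := by
    intro n
    induction n with
    | zero => simp
    | succ n ihn =>
      intro x
      rw [pow_succ', mul_assoc, h, ihn, ← mul_assoc, ← pow_succ']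
  induction r using Polynomial.induction_on' with
  | add a b ha hb => rw [add_mul, map_add, ha, hb, add_mul]
  | monomial n a =>
    calc f (monomial n a * x) = f (a • (Polynomial.X ^ n * x)) := by
          rw [← smul_X_eq_monomial, smul_mul_assoc]
      _ = a • f (Polynomial.X ^ n * x) := map_smul f a _
      _ = a • (Polynomial.X ^ n * f x) := by rw [hXn]
      _ = monomial n a * f x := by rw [← smul_mul_assoc, smul_X_eq_monomial]



lemma eq_mulLeft_of_commX {f : Polynomial ℤ →ₗ[ℤ] Polynomial ℤ}
    (h : f ∘ₗ LinearMap.mulLeft ℤ Polynomial.X = LinearMap.mulLeft ℤ Polynomial.X ∘ₗ f) :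
    f = LinearMap.mulLeft ℤ (f 1) := by
  refine LinearMap.ext fun x => ?_
  have h' : ∀ y, f (Polynomial.X * y) = Polynomial.X * f y := fun y => by
    simpa using LinearMap.congr_fun h y
  have := commX_all h' x 1
  simpa [mul_comm] using this

lemma hasse_succ_commX (j : ℕ) :
    (hasseDeriv (j+1) : Polynomial ℤ →ₗ[ℤ] Polynomial ℤ) ∘ₗ LinearMap.mulLeft ℤ Polynomial.X -
      LinearMap.mulLeft ℤ Polynomial.X ∘ₗ hasseDeriv (j+1) = hasseDeriv j := by
  refine LinearMap.ext fun x => ?_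
  simp only [LinearMap.sub_apply, LinearMap.comp_apply, LinearMap.mulLeft_apply]
  rw [hasseDeriv_mul, Finset.Nat.sum_antidiagonal_eq_sum_range_succ_mk,
    Finset.sum_range_succ', Finset.sum_range_succ']
  simp only [hasseDeriv_zero', Nat.succ_sub_succ, Nat.sub_zero]
  rw [Finset.sum_eq_zero (fun i _ => by
    rw [hasseDeriv_X _ (by omega), zero_mul])]
  simp [hasseDeriv_one']

lemma rep_zero (n : ℕ) (p : Fin (n+1) → Polynomial ℤ)
    (h : ∑ j : Fin (n+1), LinearMap.mulLeft ℤ (p j) ∘ₗ Polynomial.hasseDeriv (j : ℕ) = 0) :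
    p = 0 := by
  suffices H : ∀ m : ℕ, ∀ hm : m < n+1, p ⟨m, hm⟩ = 0 by
    funext i
    simpa using H i i.isLt
  intro m
  induction m using Nat.strong_induction_on with
  | _ m ih =>
  intro hm
  have hx := LinearMap.congr_fun h (Polynomial.X ^ m)
  simp only [LinearMap.sum_apply, LinearMap.comp_apply, LinearMap.mulLeft_apply,
    LinearMap.zero_apply, X_pow_eq_monomial, hasseDeriv_monomial] at hx
  rw [Finset.sum_eq_single (⟨m, hm⟩ : Fin (n+1))] at hx
  · simpa using hx
  · intro j _ hj
    rcases Nat.lt_or_ge (j : ℕ) m with hlt | hge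
    · have hp : p j = 0 := by
        have := ih (j : ℕ) hlt j.isLt
        simpa [Fin.eta] using this
      simp [hp]
    · have hgt : m < (j : ℕ) := lt_of_le_of_ne hge (fun e => hj (Fin.ext e.symm))
      simp [Nat.choose_eq_zero_of_lt hgt]
  · intro hcon
    exact absurd (Finset.mem_univ _) hcon

lemma exists_rep : ∀ n : ℕ, ∀ f ∈ D ℤ (Polynomial ℤ) n,
    ∃ p : Fin (n+1) → Polynomial ℤ,
      f = ∑ j : Fin (n + 1), LinearMap.mulLeft ℤ (p j) ∘ₗ Polynomial.hasseDeriv (j : ℕ) := by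
  intro n
  induction n with
  | zero =>
    intro f hf
    have h0 : f ∘ₗ LinearMap.mulLeft ℤ Polynomial.X -
        LinearMap.mulLeft ℤ Polynomial.X ∘ₗ f = 0 :=
      Set.mem_singleton_iff.mp (hf Polynomial.X)
    have hX := eq_mulLeft_of_commX (sub_eq_zero.mp h0)
    refine ⟨fun _ => f 1, ?_⟩
    simpa [hasseDeriv_zero] using hX
  | succ n ih =>
    intro f hf
    have hg : (f ∘ₗ LinearMap.mulLeft ℤ Polynomial.X -
        LinearMap.mulLeft ℤ Polynomial.X ∘ₗ f) ∈ D ℤ (Polynomial ℤ) n := hf Polynomial.X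
    obtain ⟨q, hq⟩ := ih _ hg
    set S : Polynomial ℤ →ₗ[ℤ] Polynomial ℤ :=
      ∑ j : Fin (n+1), LinearMap.mulLeft ℤ (q j) ∘ₗ Polynomial.hasseDeriv ((j : ℕ) + 1)
      with hSdef
    have hScomm : S ∘ₗ LinearMap.mulLeft ℤ Polynomial.X -
        LinearMap.mulLeft ℤ Polynomial.X ∘ₗ S
        = ∑ j : Fin (n+1), LinearMap.mulLeft ℤ (q j) ∘ₗ Polynomial.hasseDeriv (j : ℕ) := by
      refine LinearMap.ext fun x => ?_
      simp only [hSdef, LinearMap.sub_apply, LinearMap.comp_apply, LinearMap.sum_apply,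
        LinearMap.mulLeft_apply, Finset.mul_sum]
      rw [← Finset.sum_sub_distrib]
      refine Finset.sum_congr rfl fun j _ => ?_
      have hc := LinearMap.congr_fun (hasse_succ_commX (j : ℕ)) x
      simp only [LinearMap.sub_apply, LinearMap.comp_apply, LinearMap.mulLeft_apply] at hc
      rw [mul_left_comm, ← mul_sub, hc]
    have hd : (f - S) ∘ₗ LinearMap.mulLeft ℤ Polynomial.X =
        LinearMap.mulLeft ℤ Polynomial.X ∘ₗ (f - S) := by
      have e1 : (f - S) ∘ₗ LinearMap.mulLeft ℤ Polynomial.X -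
          LinearMap.mulLeft ℤ Polynomial.X ∘ₗ (f - S)
          = (f ∘ₗ LinearMap.mulLeft ℤ Polynomial.X - LinearMap.mulLeft ℤ Polynomial.X ∘ₗ f) -
            (S ∘ₗ LinearMap.mulLeft ℤ Polynomial.X - LinearMap.mulLeft ℤ Polynomial.X ∘ₗ S) := by
        rw [LinearMap.sub_comp, LinearMap.comp_sub]
        abel
      have e2 : (f - S) ∘ₗ LinearMap.mulLeft ℤ Polynomial.X -
          LinearMap.mulLeft ℤ Polynomial.X ∘ₗ (f - S) = 0 := by
        rw [e1, hScomm, ← hq, sub_self]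
      exact sub_eq_zero.mp e2
    have hfS := eq_mulLeft_of_commX hd
    refine ⟨Fin.cases ((f - S) 1) q, ?_⟩
    rw [Fin.sum_univ_succ]
    simp only [Fin.cases_succ, Fin.cases_zero, Fin.val_succ, Fin.val_zero,
      hasseDeriv_zero, LinearMap.comp_id]
    rw [← hSdef, ← hfS]
    abel

end Aux

/-- For `k = ℤ` and `R = ℤ[X]` and every `n ≥ 0`, `D^(n)` is a free
`ℤ[X]`-module with basis `h_0, h_1, …, h_n`: every `ℤ[X]`-linear combination
`Σ_{j=0}^{n} m_{p_j} ∘ h_j` lies in `D^(n)`, and every `f ∈ D^(n)` can be written uniquely as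
`f = Σ_{j=0}^{n} m_{p_j} ∘ h_j` with `p_0, …, p_n ∈ ℤ[X]` (where `ℤ[X]` acts on
`Hom_ℤ(ℤ[X],ℤ[X])` by postcomposition with multiplication operators). -/
theorem D_free_on_hasseDeriv (n : ℕ) :
    (∀ p : Fin (n + 1) → Polynomial ℤ,
      (∑ j : Fin (n + 1),
        LinearMap.mulLeft ℤ (p j) ∘ₗ Polynomial.hasseDeriv (j : ℕ)) ∈ D ℤ (Polynomial ℤ) n) ∧
    (∀ f ∈ D ℤ (Polynomial ℤ) n,
      ∃! p : Fin (n + 1) → Polynomial ℤ,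
        f = ∑ j : Fin (n + 1),
          LinearMap.mulLeft ℤ (p j) ∘ₗ Polynomial.hasseDeriv (j : ℕ)) := by
  constructor
  · intro p
    refine sum_mem_Dm _ _ fun j _ => ?_
    have hj : (j : ℕ) + 1 ≤ n + 1 := Nat.succ_le_succ (Nat.lt_succ_iff.mp j.isLt)
    exact Dm_le hj (mulLeft_comp_mem_Dm _ (hasse_mem_Dm (j : ℕ)))
  · intro f hf
    obtain ⟨p, hp⟩ := exists_rep n f hf
    refine ⟨p, hp, ?_⟩
    intro q hq
    have hsub : ∑ j : Fin (n + 1),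
        LinearMap.mulLeft ℤ (q j - p j) ∘ₗ Polynomial.hasseDeriv (j : ℕ) = 0 := by
      have e : ∀ j : Fin (n + 1),
          LinearMap.mulLeft ℤ (q j - p j) = LinearMap.mulLeft ℤ (q j) - LinearMap.mulLeft ℤ (p j) :=
        fun j => LinearMap.ext fun x => sub_mul _ _ _
      simp only [e, LinearMap.sub_comp, Finset.sum_sub_distrib]
      rw [← hp, ← hq, sub_self]
    have hz := rep_zero n _ hsub
    funext j
    have := congrFun hz j
    simpa [sub_eq_zero] using this


end GrothDiff
end
end
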